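/- Let q ∈ ℂ, let n ≥ 1 be an integer and let I ⊆ [n−1]. Then L^{(q)}_{n,I} = Σ (−q)^{|K|}(q−1)^{|J|} · η^{(q)}_{n, J ∪ (K−1) ∪ K}, the sum ranging over all pairs (J, K) with J ⊆ I, K ⊆ Peak(I) and J ∩ K = ∅, where K−1 = {k−1 : k ∈ K}. -/
import Mathlib


open Finset
open scoped Classical

namespace ExtPeaks

/-- `fget g j` is the `j`-th entry (1-indexed) of the sequence `g : Fin n → ℕ`,
so `fget g j = g ⟨j - 1, _⟩` for `1 ≤ j ≤ n`. -/
def fget {n : ℕ} (g : Fin n → ℕ) (j : ℕ) : ℕ :=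
  if h : j - 1 < n then g ⟨j - 1, h⟩ else 0

/-- `Peak(I) = {i ∈ I : i ≥ 2 and i - 1 ∉ I}`. -/
def peakOf (I : Finset ℕ) : Finset ℕ :=
  I.filter fun i => 2 ≤ i ∧ i - 1 ∉ I

/-- The monomial `x_{i_1} ⋯ x_{i_n}` attached to a sequence `g`, as a `Finsupp`. -/
noncomputable def monomialOf {n : ℕ} (g : Fin n → ℕ) : ℕ →₀ ℕ :=
  ∑ j, Finsupp.single (g j) 1

/-- The (finitely many) weakly increasing sequences of positive integers of length `n`,
satisfying the peak condition `i_{j-1} < i_{j+1}` for `j ∈ Peak(I)`, with monomial `d`. -/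
noncomputable def Lseqs (n : ℕ) (I : Finset ℕ) (d : ℕ →₀ ℕ) : Finset (Fin n → ℕ) :=
  (Fintype.piFinset fun _ => d.support).filter fun g =>
    (∀ j k : Fin n, j ≤ k → g j ≤ g k) ∧ (∀ j, 1 ≤ g j) ∧
    (∀ j ∈ peakOf I, fget g (j - 1) < fget g (j + 1)) ∧ monomialOf g = d

/-- The `q`-fundamental quasisymmetric function `L^{(q)}_{n,I}`, as a formal power
series in the variables `x_1, x_2, …` (defined coefficientwise). -/
noncomputable def Lq (q : ℂ) (n : ℕ) (I : Finset ℕ) : MvPowerSeries ℕ ℂ :=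
  fun d => ∑ g ∈ Lseqs n I d,
    q ^ (I.filter fun j => fget g j = fget g (j + 1)).card *
      (q + 1) ^ (Finset.image g Finset.univ).card

/-- The weakly increasing sequences of positive integers of length `s` with
`i_j = i_{j+1}` for all `j ∈ I`, with monomial `d`. -/
noncomputable def etaSeqs (s : ℕ) (I : Finset ℕ) (d : ℕ →₀ ℕ) : Finset (Fin s → ℕ) :=
  (Fintype.piFinset fun _ => d.support).filter fun g =>
    (∀ j k : Fin s, j ≤ k → g j ≤ g k) ∧ (∀ j, 1 ≤ g j) ∧
    (∀ j ∈ I, fget g j = fget g (j + 1)) ∧ monomialOf g = d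

/-- The enriched `q`-monomial quasisymmetric function `η^{(q)}_{s,I}`. -/
noncomputable def etaq (q : ℂ) (s : ℕ) (I : Finset ℕ) : MvPowerSeries ℕ ℂ :=
  fun d => ∑ g ∈ etaSeqs s I d, (q + 1) ^ (Finset.image g Finset.univ).card

/-- `I` is a `p`-extended peak set: `I ∪ {0}` contains no `p + 1` consecutive integers. -/
def IsExtPeakSet (p : ℕ) (I : Finset ℕ) : Prop :=
  ∀ a : ℕ, ¬ Finset.Icc a (a + p) ⊆ insert 0 I

/-- `s^{(p)}_n`: the number of `p`-extended peak subsets of `[n-1]`, with `s^{(p)}_0 = 0`. -/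
noncomputable def sCount (p n : ℕ) : ℕ :=
  if n = 0 then 0
  else ((Finset.Icc 1 (n - 1)).powerset.filter fun I => IsExtPeakSet p I).card

/-- The value `π(j)` of the permutation at the (1-indexed) position `j`,
as an element of `{1, …, n}`. -/
def pval {n : ℕ} (π : Equiv.Perm (Fin n)) (j : ℕ) : ℕ :=
  if h : j - 1 < n then (π ⟨j - 1, h⟩ : ℕ) + 1 else 0

/-- The descent set `Des(π) = {1 ≤ i ≤ n-1 : π(i) > π(i+1)}`. -/
def desSet {n : ℕ} (π : Equiv.Perm (Fin n)) : Finset ℕ :=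
  (Finset.Icc 1 (n - 1)).filter fun i => pval π (i + 1) < pval π i

/-- The peak set `Peak(π) = {2 ≤ i ≤ n-1 : π(i-1) < π(i) > π(i+1)}`. -/
def peakSet {n : ℕ} (π : Equiv.Perm (Fin n)) : Finset ℕ :=
  (Finset.Icc 2 (n - 1)).filter fun i =>
    pval π (i - 1) < pval π i ∧ pval π (i + 1) < pval π i

/-- The `p`-extended peak set `Peak_p(π)` of a permutation: the descents `i` such that
`i ≤ p - 1` or some position `i - j` (with `1 ≤ j ≤ p` and `i - j ≥ 1`) is not a descent. -/
def peakP {n : ℕ} (p : ℕ) (π : Equiv.Perm (Fin n)) : Finset ℕ :=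
  (desSet π).filter fun i =>
    i ≤ p - 1 ∨ ∃ j ∈ Finset.Icc 1 p, 1 ≤ i - j ∧ i - j ∉ desSet π

/-- `ρ_p = exp(-iπ(p-1)/(p+1))`. -/
noncomputable def rho (p : ℕ) : ℂ :=
  Complex.exp (-((Real.pi : ℂ) * ((p : ℂ) - 1) / ((p : ℂ) + 1)) * Complex.I)

/-- `[m]_c = 1 + c + ⋯ + c^(m-1)`. -/
noncomputable def qint (m : ℕ) (c : ℂ) : ℂ := ∑ j ∈ Finset.range m, c ^ j

/-- The entry of the transition matrix `B^{(q)}` at row `J`, column `I`: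
`Σ (-q)^{|K|} (q-1)^{|J'|}` over pairs `(J', K)` with `J' ⊆ I`, `K ⊆ Peak(I)`,
`J' ∩ K = ∅` and `J' ∪ (K-1) ∪ K = J`. -/
noncomputable def Bentry (q : ℂ) (J I : Finset ℕ) : ℂ :=
  ∑ J' ∈ I.powerset, ∑ K ∈ (peakOf I).powerset,
    if Disjoint J' K ∧ J' ∪ K.image (· - 1) ∪ K = J then
      (-q) ^ K.card * (q - 1) ^ J'.card
    else 0

/-- The collection of all subsets of `[n-1]` (the empty collection when `n = 0`,
so that `B_0` is the empty matrix). -/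
def subsetsOf (n : ℕ) : Finset (Finset ℕ) :=
  if n = 0 then ∅ else (Finset.Icc 1 (n - 1)).powerset

/-- The matrix `B_n^{(q)}`, with rows and columns indexed by the subsets of `[n-1]`. -/
noncomputable def Bmat (q : ℂ) (n : ℕ) : Matrix ↥(subsetsOf n) ↥(subsetsOf n) ℂ :=
  fun J I => Bentry q J.1 I.1

/-- The entry of `A_n^{(q)}` at row `J'`, column `I'`, namely
`B_n^{(q)}(J' ∪ {n-1}, I' ∪ {n-1})`. -/
noncomputable def Aentry (q : ℂ) (n : ℕ) (J I : Finset ℕ) : ℂ :=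
  Bentry q (insert (n - 1) J) (insert (n - 1) I)

/-- The matrix `A_n^{(q)}`, with rows and columns indexed by the subsets of `[n-2]`. -/
noncomputable def Amat (q : ℂ) (n : ℕ) :
    Matrix ↥(subsetsOf (n - 1)) ↥(subsetsOf (n - 1)) ℂ :=
  fun J I => Aentry q n J.1 I.1

/-- The dimension of the kernel of (the linear map associated with) `B_n^{(q)}`. -/
noncomputable def dimKer (q : ℂ) (n : ℕ) : ℕ :=
  Module.finrank ℂ (LinearMap.ker (Matrix.mulVecLin (Bmat q n)))

/-! ### Auxiliary lemmas for Statement 14 -/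

private lemma sum_pow_sub_one (q : ℂ) (s : Finset ℕ) :
    ∑ J ∈ s.powerset, (q - 1) ^ J.card = q ^ s.card := by
  have h := Finset.prod_add (fun _ : ℕ => q - 1) (fun _ : ℕ => (1 : ℂ)) s
  simp only [sub_add_cancel, Finset.prod_const, Finset.prod_const_one, mul_one,
    one_pow] at h
  rw [← h]

private lemma powerset_filter_subset'' {t s : Finset ℕ} (h : t ⊆ s) :
    s.powerset.filter (fun J => J ⊆ t) = t.powerset := by
  ext J
  simp only [Finset.mem_filter, Finset.mem_powerset]
  exact ⟨fun h' => h'.2, fun h' => ⟨h'.trans h, h'⟩⟩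

private lemma sum_neg_one_pow (s : Finset ℕ) :
    ∑ K ∈ s.powerset, (-1 : ℂ) ^ K.card = if s = ∅ then 1 else 0 := by
  have h := Finset.sum_powerset_neg_one_pow_card (x := s)
  have : ((∑ m ∈ s.powerset, (-1 : ℤ) ^ m.card : ℤ) : ℂ)
      = ∑ K ∈ s.powerset, (-1 : ℂ) ^ K.card := by push_cast; rfl
  rw [← this, h]
  split <;> simp

/-- The key combinatorial identity, for a fixed sequence encoded by the
equality predicate `e`. -/
private lemma key_identity (q : ℂ) (I P : Finset ℕ) (hPI : P ⊆ I)
    (e : ℕ → Prop) [DecidablePred e] :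
    (∑ J ∈ I.powerset, ∑ K ∈ (P.powerset.filter fun K => Disjoint J K),
      if ∀ j ∈ J ∪ K.image (· - 1) ∪ K, e j then (-q) ^ K.card * (q - 1) ^ J.card
      else 0)
    = if ∀ k ∈ P, ¬(e (k - 1) ∧ e k) then q ^ (I.filter e).card else 0 := by
  classical
  set E := I.filter e with hE
  set P' := P.filter (fun k => e (k - 1) ∧ e k) with hP'
  have hP'P : P' ⊆ P := Finset.filter_subset _ _
  have hP'E : P' ⊆ E := by
    intro k hk
    rw [hP', Finset.mem_filter] at hk
    rw [hE, Finset.mem_filter]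
    exact ⟨hPI hk.1, hk.2.2⟩
  have hmem : ∀ (J K : Finset ℕ),
      (∀ j ∈ J ∪ K.image (· - 1) ∪ K, e j) ↔
        ((∀ j ∈ J, e j) ∧ (∀ k ∈ K, e (k - 1)) ∧ (∀ k ∈ K, e k)) := by
    intro J K
    constructor
    · intro h
      refine ⟨fun j hj => h j (by simp [hj]), fun k hk => ?_, fun k hk => h k (by simp [hk])⟩
      refine h (k - 1) ?_
      simp only [Finset.mem_union, Finset.mem_image]
      exact Or.inl (Or.inr ⟨k, hk, rfl⟩)
    · rintro ⟨h1, h2, h3⟩ j hj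
      simp only [Finset.mem_union, Finset.mem_image] at hj
      rcases hj with (hj | ⟨k, hk, rfl⟩) | hj
      · exact h1 j hj
      · exact h2 k hk
      · exact h3 j hj
  -- rewrite the inner filtered sum as an `if`-sum and swap the two sums
  have hrw : (∑ J ∈ I.powerset, ∑ K ∈ (P.powerset.filter fun K => Disjoint J K),
      if ∀ j ∈ J ∪ K.image (· - 1) ∪ K, e j then (-q) ^ K.card * (q - 1) ^ J.card
      else 0)
      = ∑ K ∈ P.powerset, ∑ J ∈ I.powerset,
        if Disjoint J K ∧ ∀ j ∈ J ∪ K.image (· - 1) ∪ K, e j then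
          (-q) ^ K.card * (q - 1) ^ J.card else 0 := by
    refine Eq.trans (Finset.sum_congr rfl fun J _ => ?_) Finset.sum_comm
    rw [Finset.sum_filter]
    refine Finset.sum_congr rfl fun K _ => ?_
    by_cases hd : Disjoint J K
    · simp [hd]
    · simp [hd]
  rw [hrw]
  -- evaluate the inner sum for each `K`
  have step : ∀ K ∈ P.powerset,
      (∑ J ∈ I.powerset,
        if Disjoint J K ∧ ∀ j ∈ J ∪ K.image (· - 1) ∪ K, e j then
          (-q) ^ K.card * (q - 1) ^ J.card else 0)
      = if K ⊆ P' then (-q) ^ K.card * q ^ (E \ K).card else 0 := by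
    intro K hK
    rw [Finset.mem_powerset] at hK
    by_cases hKP' : K ⊆ P'
    · rw [if_pos hKP']
      have hKe : ∀ k ∈ K, e (k - 1) ∧ e k := by
        intro k hk
        have := hKP' hk
        rw [hP', Finset.mem_filter] at this
        exact this.2
      have hcond : ∀ J ∈ I.powerset,
          (Disjoint J K ∧ ∀ j ∈ J ∪ K.image (· - 1) ∪ K, e j) ↔ J ⊆ E \ K := by
        intro J hJ
        rw [Finset.mem_powerset] at hJ
        rw [hmem]
        constructor
        · rintro ⟨hd, h1, -, -⟩
          intro j hj
          rw [Finset.mem_sdiff, hE, Finset.mem_filter]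
          exact ⟨⟨hJ hj, h1 j hj⟩, Finset.disjoint_left.mp hd hj⟩
        · intro hJs
          have h1 : ∀ j ∈ J, e j := by
            intro j hj
            have := hJs hj
            rw [Finset.mem_sdiff, hE, Finset.mem_filter] at this
            exact this.1.2
          refine ⟨Finset.disjoint_left.mpr fun j hj => ?_, h1,
            fun k hk => (hKe k hk).1, fun k hk => (hKe k hk).2⟩
          have := hJs hj
          rw [Finset.mem_sdiff] at this
          exact this.2
      calc (∑ J ∈ I.powerset,
            if Disjoint J K ∧ ∀ j ∈ J ∪ K.image (· - 1) ∪ K, e j then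
              (-q) ^ K.card * (q - 1) ^ J.card else 0)
          = ∑ J ∈ I.powerset,
            if J ⊆ E \ K then (-q) ^ K.card * (q - 1) ^ J.card else 0 := by
            refine Finset.sum_congr rfl fun J hJ => ?_
            simp only [hcond J hJ]
        _ = ∑ J ∈ (E \ K).powerset, (-q) ^ K.card * (q - 1) ^ J.card := by
            rw [← Finset.sum_filter,
              powerset_filter_subset'' ((Finset.sdiff_subset).trans (Finset.filter_subset _ _))]
        _ = (-q) ^ K.card * q ^ (E \ K).card := by
            rw [← Finset.mul_sum, sum_pow_sub_one]
    · rw [if_neg hKP']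
      refine Finset.sum_eq_zero fun J _ => ?_
      rw [if_neg]
      rintro ⟨-, hall⟩
      rw [hmem] at hall
      exact hKP' fun k hk => by
        rw [hP', Finset.mem_filter]
        exact ⟨hK hk, hall.2.1 k hk, hall.2.2 k hk⟩
  rw [Finset.sum_congr rfl step, ← Finset.sum_filter, powerset_filter_subset'' hP'P]
  have hterm : ∀ K ∈ P'.powerset,
      (-q) ^ K.card * q ^ (E \ K).card = (-1 : ℂ) ^ K.card * q ^ E.card := by
    intro K hK
    rw [Finset.mem_powerset] at hK
    have hKE : K ⊆ E := hK.trans hP'E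
    have hle : K.card ≤ E.card := Finset.card_le_card hKE
    rw [Finset.card_sdiff_of_subset hKE, neg_pow, mul_assoc, ← pow_add]
    congr 2
    omega
  rw [Finset.sum_congr rfl hterm, ← Finset.sum_mul, sum_neg_one_pow]
  have hiff : (P' = ∅) ↔ ∀ k ∈ P, ¬(e (k - 1) ∧ e k) := by
    rw [hP', Finset.filter_eq_empty_iff]
  split_ifs with h1 h2 h2
  · rw [one_mul]
  · exact absurd (hiff.mp h1) h2
  · exact absurd (hiff.mpr h2) h1
  · rw [zero_mul]


private lemma etaSeqs_eq_filter (n : ℕ) (E : Finset ℕ) (d : ℕ →₀ ℕ) :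
    etaSeqs n E d = (etaSeqs n ∅ d).filter
      (fun g => ∀ j ∈ E, fget g j = fget g (j + 1)) := by
  ext g
  simp only [etaSeqs, Finset.mem_filter, Finset.notMem_empty, false_implies,
    implies_true, true_and, and_true]
  tauto

private lemma Lseqs_eq_filter (n : ℕ) (I : Finset ℕ) (d : ℕ →₀ ℕ) :
    Lseqs n I d = (etaSeqs n ∅ d).filter
      (fun g => ∀ j ∈ peakOf I, fget g (j - 1) < fget g (j + 1)) := by
  ext g
  simp only [Lseqs, etaSeqs, Finset.mem_filter, Finset.notMem_empty, false_implies,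
    implies_true, true_and, and_true]
  tauto

private lemma fget_mono {n : ℕ} {g : Fin n → ℕ}
    (hm : ∀ j k : Fin n, j ≤ k → g j ≤ g k) {a b : ℕ}
    (ha : 1 ≤ a) (hab : a ≤ b) (hb : b ≤ n) : fget g a ≤ fget g b := by
  have h1 : a - 1 < n := by omega
  have h2 : b - 1 < n := by omega
  rw [fget, fget, dif_pos h1, dif_pos h2]
  exact hm _ _ (by rw [Fin.le_def]; simpa using by omega)


/-- Expansion of the `q`-fundamental quasisymmetric functions in the
enriched `q`-monomial basis:
`L^{(q)}_{n,I} = Σ_{J ⊆ I, K ⊆ Peak(I), J ∩ K = ∅} (-q)^{|K|} (q-1)^{|J|}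
  η^{(q)}_{n, J ∪ (K-1) ∪ K}`. -/
theorem Lq_eq_sum_etaq (q : ℂ) (n : ℕ) (hn : 1 ≤ n) (I : Finset ℕ)
    (hI : I ⊆ Finset.Icc 1 (n - 1)) :
    Lq q n I =
      ∑ J ∈ I.powerset,
        ∑ K ∈ (peakOf I).powerset.filter (fun K => Disjoint J K),
          ((-q) ^ K.card * (q - 1) ^ J.card) •
            etaq q n (J ∪ K.image (· - 1) ∪ K) := by
  classical
  apply MvPowerSeries.ext
  intro d
  simp only [map_sum, map_smul, smul_eq_mul, MvPowerSeries.coeff_apply]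
  simp only [Lq, etaq]
  refine Eq.symm ?_
  calc
    (∑ J ∈ I.powerset, ∑ K ∈ (peakOf I).powerset.filter (fun K => Disjoint J K),
        (-q) ^ K.card * (q - 1) ^ J.card *
          ∑ g ∈ etaSeqs n (J ∪ K.image (· - 1) ∪ K) d,
            (q + 1) ^ (Finset.image g Finset.univ).card)
      = ∑ J ∈ I.powerset, ∑ K ∈ (peakOf I).powerset.filter (fun K => Disjoint J K),
          ∑ g ∈ etaSeqs n ∅ d,
            (if ∀ j ∈ J ∪ K.image (· - 1) ∪ K, fget g j = fget g (j + 1) then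
              (-q) ^ K.card * (q - 1) ^ J.card else 0) *
              (q + 1) ^ (Finset.image g Finset.univ).card := by
        refine Finset.sum_congr rfl fun J _ => Finset.sum_congr rfl fun K _ => ?_
        rw [etaSeqs_eq_filter, Finset.sum_filter, Finset.mul_sum]
        refine Finset.sum_congr rfl fun g _ => ?_
        rw [ite_mul, zero_mul, mul_ite, mul_zero]
    _ = ∑ g ∈ etaSeqs n ∅ d, ∑ J ∈ I.powerset,
          ∑ K ∈ (peakOf I).powerset.filter (fun K => Disjoint J K),
            (if ∀ j ∈ J ∪ K.image (· - 1) ∪ K, fget g j = fget g (j + 1) then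
              (-q) ^ K.card * (q - 1) ^ J.card else 0) *
              (q + 1) ^ (Finset.image g Finset.univ).card := by
        rw [← Finset.sum_comm]
        exact Finset.sum_congr rfl fun J _ => Finset.sum_comm
    _ = ∑ g ∈ etaSeqs n ∅ d,
          (∑ J ∈ I.powerset, ∑ K ∈ (peakOf I).powerset.filter (fun K => Disjoint J K),
            if ∀ j ∈ J ∪ K.image (· - 1) ∪ K, fget g j = fget g (j + 1) then
              (-q) ^ K.card * (q - 1) ^ J.card else 0) *
            (q + 1) ^ (Finset.image g Finset.univ).card := by
        refine Finset.sum_congr rfl fun g _ => ?_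
        rw [Finset.sum_mul]
        refine Finset.sum_congr rfl fun J _ => ?_
        rw [Finset.sum_mul]
        refine Finset.sum_congr rfl fun K _ => ?_
        congr 1
        split_ifs <;> rfl
    _ = ∑ g ∈ etaSeqs n ∅ d,
          (if ∀ j ∈ peakOf I, fget g (j - 1) < fget g (j + 1) then
            q ^ (I.filter fun j => fget g j = fget g (j + 1)).card *
              (q + 1) ^ (Finset.image g Finset.univ).card
          else 0) := by
        refine Finset.sum_congr rfl fun g hg => ?_
        rw [etaSeqs, Finset.mem_filter] at hg
        obtain ⟨-, hmono, -, -, -⟩ := hg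
        rw [key_identity q I (peakOf I) (Finset.filter_subset _ _)
          (fun j => fget g j = fget g (j + 1))]
        have hiff : (∀ k ∈ peakOf I, ¬(fget g (k - 1) = fget g (k - 1 + 1) ∧
            fget g k = fget g (k + 1))) ↔
            (∀ j ∈ peakOf I, fget g (j - 1) < fget g (j + 1)) := by
          refine forall₂_congr fun k hk => ?_
          rw [peakOf, Finset.mem_filter] at hk
          have hk1 : 2 ≤ k := hk.2.1
          have hk2 : k ≤ n - 1 := (Finset.mem_Icc.mp (hI hk.1)).2
          have hkk : k - 1 + 1 = k := by omega
          have hle1 : fget g (k - 1) ≤ fget g k :=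
            fget_mono hmono (by omega) (by omega) (by omega)
          have hle2 : fget g k ≤ fget g (k + 1) :=
            fget_mono hmono (by omega) (by omega) (by omega)
          rw [hkk]
          omega
        by_cases hpk : ∀ j ∈ peakOf I, fget g (j - 1) < fget g (j + 1)
        · rw [if_pos (hiff.mpr hpk), if_pos hpk]
        · rw [if_neg (fun h => hpk (hiff.mp h)), if_neg hpk, zero_mul]
    _ = ∑ g ∈ Lseqs n I d,
          q ^ (I.filter fun j => fget g j = fget g (j + 1)).card *
            (q + 1) ^ (Finset.image g Finset.univ).card := by
        rw [Lseqs_eq_filter, Finset.sum_filter]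

end ExtPeaks
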